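/- arXiv:1912.04533 — 3 statements merged into one kernel-verified Lean document; each statement's English description precedes it below -/
import Mathlib

section
/- If A and B are independent determinant preserving random d×d matrices, then A + B is determinant preserving. -/
/-!
Fix a value `b` of `B`. Expanding `det ((a + b)_{IJ})` row by row, it is a linear combination,
with coefficients depending only on `b`, of the minors of `a`; more precisely, every function
`a ↦ det (a_{IJ} + M)` lies in any linear space of functions containing all minors `a ↦ det a_{IJ}`.
Taking for that space the functions whose mean under the law of `A` equals their value at `𝔼 A`,
a determinant preserving `A` satisfies `𝔼 det (A_{IJ} + M) = det ((𝔼 A)_{IJ} + M)` for every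
constant `M`. By independence and Fubini, `𝔼 det ((A + B)_{IJ})` is obtained by applying this
first to `B` with `M = a_{IJ}` and then to `A` with `M = (𝔼 B)_{IJ}`.
The integrability of the minors of `A` comes from the same expansion, applied to the space of
functions `f` with `a ↦ f (a + b₀)` integrable, where `b₀` is chosen so that all Fubini slices
`a ↦ det ((a + b₀)_{IJ})` of the minors of `A + B` are integrable.
-/

open Matrix MeasureTheory ProbabilityTheory

/-- The product measurable space on matrices (matrices are functions). -/
instance matrixMeasurableSpace {m n α : Type*} [MeasurableSpace α] :
    MeasurableSpace (Matrix m n α) :=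
  MeasurableSpace.pi (X := fun _ : m => n → α)

/-- A random `d × d` matrix is determinant preserving if expectation commutes with the
determinant on every square submatrix. -/
def DetPreserving {Ω : Type*} [MeasurableSpace Ω] (μ : Measure Ω) {d : ℕ}
    (A : Ω → Matrix (Fin d) (Fin d) ℝ) : Prop :=
  ∀ (k : ℕ) (ρ σ : Fin k → Fin d), Function.Injective ρ → Function.Injective σ →
    (∫ ω, ((A ω).submatrix ρ σ).det ∂μ) =
      ((Matrix.of fun i j => ∫ ω, A ω i j ∂μ).submatrix ρ σ).det

instance Matrix.borelSpace {m n α : Type*} [Countable m] [Countable n] [TopologicalSpace α]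
    [MeasurableSpace α] [SecondCountableTopology α] [BorelSpace α] :
    BorelSpace (Matrix m n α) :=
  inferInstanceAs (BorelSpace (m → n → α))

instance Matrix.measurableAdd₂ {m n α : Type*} [Countable m] [Countable n] [MeasurableSpace α]
    [Add α] [MeasurableAdd₂ α] :
    MeasurableAdd₂ (Matrix m n α) :=
  inferInstanceAs (MeasurableAdd₂ (m → n → α))

namespace Matrix

variable {R m : Type*} [CommRing R]

theorem det_submatrix_eq_zero_of_not_injective (X : Matrix m m R) {k : ℕ} {ρ σ : Fin k → m}
    (h : ¬(ρ.Injective ∧ σ.Injective)) : (X.submatrix ρ σ).det = 0 := by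
  simp_rw [not_and_or, Function.not_injective_iff] at h
  obtain ⟨i, j, hρ, hij⟩ | ⟨i, j, hσ, hij⟩ := h
  · exact det_zero_of_row_eq hij (by ext; simp [hρ])
  · exact det_zero_of_column_eq hij (by simp [hσ])

theorem det_submatrix_add_eq_updateRow_add_sum (X : Matrix m m R) {k : ℕ}
    (ρ σ : Fin (k + 1) → m) (M : Matrix (Fin (k + 1)) (Fin (k + 1)) R) (i : Fin (k + 1)) :
    (X.submatrix ρ σ + M).det = (X.submatrix ρ σ + M.updateRow i 0).det +
      ∑ j : Fin (k + 1), (-1) ^ ((i : ℕ) + j) * M i j *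
        (X.submatrix (ρ ∘ i.succAbove) (σ ∘ j.succAbove) +
          M.submatrix i.succAbove j.succAbove).det := by
  set N := X.submatrix ρ σ + M.updateRow i 0
  have hN : X.submatrix ρ σ + M = N.updateRow i (N i + M i) := by
    ext i' j'
    rcases eq_or_ne i' i with rfl | hne <;> simp [N, updateRow_ne, *]
  rw [hN, det_updateRow_add, updateRow_eq_self, det_succ_row (N.updateRow i (M i)) i]
  refine congrArg _ (Finset.sum_congr rfl fun j _ => ?_)
  congr 2
  · simp
  · ext i' j'
    simp [N]

variable (S : Submodule R (Matrix m m R → R))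

theorem det_submatrix_add_mem_succ {k : ℕ} {ρ σ : Fin (k + 1) → m}
    (h₀ : (fun X : Matrix m m R => (X.submatrix ρ σ).det) ∈ S)
    (ih : ∀ (ρ' σ' : Fin k → m) (M : Matrix (Fin k) (Fin k) R),
      (fun X : Matrix m m R => (X.submatrix ρ' σ' + M).det) ∈ S)
    (s : Finset (Fin (k + 1))) (M : Matrix (Fin (k + 1)) (Fin (k + 1)) R)
    (hM : ∀ i ∉ s, M i = 0) :
    (fun X : Matrix m m R => (X.submatrix ρ σ + M).det) ∈ S := by
  induction s using Finset.induction_on generalizing M with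
  | empty =>
    obtain rfl : M = 0 := funext fun i => hM i (Finset.notMem_empty i)
    simpa using h₀
  | insert i s hi ihs =>
    have hsplit : (fun X : Matrix m m R => (X.submatrix ρ σ + M).det) =
        (fun X => (X.submatrix ρ σ + M.updateRow i 0).det) +
          ∑ j : Fin (k + 1), ((-1) ^ ((i : ℕ) + j) * M i j) • fun X : Matrix m m R =>
            (X.submatrix (ρ ∘ i.succAbove) (σ ∘ j.succAbove) +
              M.submatrix i.succAbove j.succAbove).det := by
      ext X
      simp [det_submatrix_add_eq_updateRow_add_sum X ρ σ M i, Finset.sum_apply]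
    rw [hsplit]
    refine S.add_mem (ihs _ fun i' hi' => ?_) (S.sum_mem fun j _ => S.smul_mem _ (ih _ _ _))
    rcases eq_or_ne i' i with rfl | hne
    · simp
    · rw [updateRow_ne hne]
      exact hM i' (by simp [hne, hi'])

theorem det_submatrix_add_mem
    (h : ∀ k (ρ σ : Fin k → m), ρ.Injective → σ.Injective →
      (fun X : Matrix m m R => (X.submatrix ρ σ).det) ∈ S)
    (k : ℕ) (ρ σ : Fin k → m) (M : Matrix (Fin k) (Fin k) R) :
    (fun X : Matrix m m R => (X.submatrix ρ σ + M).det) ∈ S := by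
  have h' : ∀ k (ρ σ : Fin k → m), (fun X : Matrix m m R => (X.submatrix ρ σ).det) ∈ S := by
    intro k ρ σ
    by_cases hρσ : ρ.Injective ∧ σ.Injective
    · exact h k ρ σ hρσ.1 hρσ.2
    · convert S.zero_mem using 1
      exact funext fun X : Matrix m m R => det_submatrix_eq_zero_of_not_injective X hρσ
  induction k with
  | zero => simpa [det_isEmpty] using h' 0 ρ σ
  | succ k ih =>
    exact det_submatrix_add_mem_succ S (h' _ ρ σ) ih Finset.univ M (by simp)

end Matrix

namespace MeasureTheory

variable {X : Type*} [MeasurableSpace X]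

def integrableSubmodule (ν : Measure X) : Submodule ℝ (X → ℝ) where
  carrier := {f | Integrable f ν}
  add_mem' := Integrable.add
  zero_mem' := integrable_zero X ℝ ν
  smul_mem' c _ hf := hf.smul c

def meanValueSubmodule (ν : Measure X) (x₀ : X) : Submodule ℝ (X → ℝ) where
  carrier := {f | Integrable f ν ∧ ∫ x, f x ∂ν = f x₀}
  add_mem' hf hg := ⟨hf.1.add hg.1, by simp [integral_add hf.1 hg.1, hf.2, hg.2]⟩
  zero_mem' := ⟨integrable_zero X ℝ ν, by simp⟩
  smul_mem' c _ hf := ⟨hf.1.smul c, by simp [integral_const_mul, hf.2]⟩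

end MeasureTheory

theorem integrable_det_submatrix_add_of_translate {m : Type*} {ν : Measure (Matrix m m ℝ)}
    (c : Matrix m m ℝ)
    (h : ∀ k (ρ σ : Fin k → m), Integrable (fun a => ((a + c).submatrix ρ σ).det) ν)
    (k : ℕ) (ρ σ : Fin k → m) (M : Matrix (Fin k) (Fin k) ℝ) :
    Integrable (fun a => (a.submatrix ρ σ + M).det) ν := by
  have := det_submatrix_add_mem ((integrableSubmodule ν).comap (LinearMap.funLeft ℝ ℝ (· + c)))
    (fun k ρ σ _ _ => h k ρ σ) k ρ σ (M - c.submatrix ρ σ)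
  change Integrable (fun a => ((a + c).submatrix ρ σ + (M - c.submatrix ρ σ)).det) ν at this
  simpa [submatrix_add] using this

theorem DetPreserving.integral_det_submatrix_add {d : ℕ} {ν : Measure (Matrix (Fin d) (Fin d) ℝ)}
    (hν : DetPreserving ν id)
    (hint : ∀ k (ρ σ : Fin k → Fin d) (M : Matrix (Fin k) (Fin k) ℝ),
      Integrable (fun a => (a.submatrix ρ σ + M).det) ν)
    (k : ℕ) (ρ σ : Fin k → Fin d) (M : Matrix (Fin k) (Fin k) ℝ) :
    ∫ a, (a.submatrix ρ σ + M).det ∂ν =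
      ((Matrix.of fun i j => ∫ a, a i j ∂ν).submatrix ρ σ + M).det :=
  (det_submatrix_add_mem (meanValueSubmodule ν _)
    (fun k ρ σ hρ hσ => ⟨by simpa using hint k ρ σ 0, hν k ρ σ hρ hσ⟩) k ρ σ M).2

theorem DetPreserving.prod_add {d : ℕ} {ν ζ : Measure (Matrix (Fin d) (Fin d) ℝ)}
    [IsProbabilityMeasure ν] [IsProbabilityMeasure ζ]
    (hν : DetPreserving ν id) (hζ : DetPreserving ζ id)
    (hint : ∀ k (ρ σ : Fin k → Fin d),
      Integrable (fun p => ((p.1 + p.2).submatrix ρ σ).det) (ν.prod ζ)) :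
    DetPreserving (ν.prod ζ) (fun p => p.1 + p.2) := by
  obtain ⟨b, hb⟩ : ∃ b, ∀ k (ρ σ : Fin k → Fin d),
      Integrable (fun a => ((a + b).submatrix ρ σ).det) ν := by
    refine Filter.Eventually.exists (f := ae ζ) ?_
    simpa only [ae_all_iff] using fun k ρ σ => (hint k ρ σ).prod_left_ae
  obtain ⟨a, ha⟩ : ∃ a, ∀ k (ρ σ : Fin k → Fin d),
      Integrable (fun b => ((a + b).submatrix ρ σ).det) ζ := by
    refine Filter.Eventually.exists (f := ae ν) ?_
    simpa only [ae_all_iff] using fun k ρ σ => (hint k ρ σ).prod_right_ae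
  have hintν := integrable_det_submatrix_add_of_translate b hb
  have hintζ := integrable_det_submatrix_add_of_translate a (by simpa only [add_comm] using ha)
  set EA := Matrix.of fun i j => ∫ a, a i j ∂ν
  set EB := Matrix.of fun i j => ∫ b, b i j ∂ζ
  have key : ∀ k (ρ σ : Fin k → Fin d),
      ∫ p, ((p.1 + p.2).submatrix ρ σ).det ∂(ν.prod ζ) = ((EA + EB).submatrix ρ σ).det := by
    intro k ρ σ
    calc ∫ p, ((p.1 + p.2).submatrix ρ σ).det ∂(ν.prod ζ)
        = ∫ a, ∫ b, (b.submatrix ρ σ + a.submatrix ρ σ).det ∂ζ ∂ν := by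
          rw [integral_prod _ (hint k ρ σ)]
          simp only [submatrix_add, Pi.add_apply, add_comm]
      _ = ∫ a, (EB.submatrix ρ σ + a.submatrix ρ σ).det ∂ν := by
          simp only [hζ.integral_det_submatrix_add hintζ, EB]
      _ = ((EA + EB).submatrix ρ σ).det := by
          simp only [add_comm (EB.submatrix ρ σ), hν.integral_det_submatrix_add hintν, EA,
            submatrix_add, Pi.add_apply]
  have hmean : (Matrix.of fun i j => ∫ p, (p.1 + p.2) i j ∂(ν.prod ζ)) = EA + EB := by
    ext i j
    have h := key 1 ![i] ![j]
    simp only [det_fin_one] at h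
    simpa using h
  intro k ρ σ _ _
  rw [hmean]
  exact key k ρ σ

theorem detPreserving_map_iff {Ω Ω' : Type*} [MeasurableSpace Ω] [MeasurableSpace Ω']
    {μ : Measure Ω} {g : Ω → Ω'} (hg : AEMeasurable g μ) {d : ℕ}
    {F : Ω' → Matrix (Fin d) (Fin d) ℝ} (hF : Measurable F) :
    DetPreserving (μ.map g) F ↔ DetPreserving μ (F ∘ g) := by
  have hdet (k : ℕ) (ρ σ : Fin k → Fin d) : Measurable fun x => ((F x).submatrix ρ σ).det := by
    fun_prop
  have hentry (i j : Fin d) : Measurable fun x => F x i j := by fun_prop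
  simp only [DetPreserving, integral_map hg (hdet _ _ _).aestronglyMeasurable,
    integral_map hg (hentry _ _).aestronglyMeasurable, Function.comp_apply]

/-- If `A` and `B` are independent determinant preserving random matrices, then `A + B`
is determinant preserving. -/
theorem detPreserving_add {Ω : Type*} [MeasurableSpace Ω]
    (μ : Measure Ω) [IsProbabilityMeasure μ] {d : ℕ}
    (A B : Ω → Matrix (Fin d) (Fin d) ℝ)
    (hMA : Measurable A) (hMB : Measurable B)
    (hInt : ∀ (k : ℕ) (ρ σ : Fin k → Fin d),
      Integrable (fun ω => ((A ω + B ω).submatrix ρ σ).det) μ)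
    (hIndep : IndepFun A B μ)
    (hA : DetPreserving μ A) (hB : DetPreserving μ B) :
    DetPreserving μ (fun ω => A ω + B ω) := by
  have hAB : AEMeasurable (fun ω => (A ω, B ω)) μ := (hMA.prodMk hMB).aemeasurable
  have hlaw : μ.map (fun ω => (A ω, B ω)) = (μ.map A).prod (μ.map B) :=
    (indepFun_iff_map_prod_eq_prod_map_map hMA.aemeasurable hMB.aemeasurable).1 hIndep
  have := Measure.isProbabilityMeasure_map (μ := μ) hMA.aemeasurable
  have := Measure.isProbabilityMeasure_map (μ := μ) hMB.aemeasurable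
  rw [← Function.id_comp A, ← detPreserving_map_iff hMA.aemeasurable measurable_id] at hA
  rw [← Function.id_comp B, ← detPreserving_map_iff hMB.aemeasurable measurable_id] at hB
  have hdet (k : ℕ) (ρ σ : Fin k → Fin d) :
      Measurable fun p : Matrix (Fin d) (Fin d) ℝ × _ => ((p.1 + p.2).submatrix ρ σ).det := by
    fun_prop
  change DetPreserving μ ((fun p => p.1 + p.2) ∘ fun ω => (A ω, B ω))
  rw [← detPreserving_map_iff hAB measurable_add, hlaw]
  refine hA.prod_add hB fun k ρ σ => ?_
  rw [← hlaw, integrable_map_measure (hdet k ρ σ).aestronglyMeasurable hAB]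
  exact hInt k ρ σ
end

section
/- Let K be a Poisson random variable with mean γ, and conditionally on K, let A and B be K×d random matrices whose rows are an i.i.d. sequence of joint pairs of random vectors (with distribution not depending on K). Then E[det(AᵀB)] = det(E[AᵀB]), where E[AᵀB] = γ·E[a bᵀ] for (aᵀ, bᵀ) a single row pair. -/
/-!
Expanding the determinant multilinearly in the rows, det (∑_{i<k} a_i b_iᵀ) is the sum, over
injective e : Fin d → {0, …, k-1}, of det (a_{e p} p * b_{e p} q)_{p q}; a repeated index gives two
proportional rows. For injective e these rows are independent with entrywise mean E[a p * b q],
and the expectation of a determinant with independent rows is the determinant of the expectations.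
So E[det | K = k] = k!/(k-d)! · det E[abᵀ], and since K is independent of the rows, averaging over
K brings in the d-th factorial moment of Poisson(γ), which is γ^d.
-/

open Matrix MeasureTheory ProbabilityTheory

namespace Matrix

variable {R ι n : Type*} [CommRing R] [Fintype n] [DecidableEq n]

theorem det_of_eq_sum_sign_mul_prod (M : n → n → R) :
    (of M).det = ∑ σ : Equiv.Perm n, (σ.sign : R) * ∏ p, M p (σ p) := by
  rw [← det_transpose, det_apply']
  rfl

theorem det_sum_vecMulVec [Fintype ι] (u v : ι → n → R) :
    (∑ i, vecMulVec (u i) (v i)).det =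
      ∑ e : n ↪ ι, (of fun p q => u (e p) p * v (e p) q).det := by
  classical
  have hrows : ∑ i, vecMulVec (u i) (v i) = of fun p => ∑ i, u i p • v i := by
    ext p q
    simp [sum_apply, vecMulVec_apply]
  have hexpand : (of fun p => ∑ i, u i p • v i).det =
      ∑ f : n → ι, (of fun p q => u (f p) p * v (f p) q).det :=
    (detRowAlternating : (n → R) [⋀^n]→ₗ[R] R).map_sum fun p i => u i p • v i
  have hvanish (f : n → ι) (hf : ¬ f.Injective) :
      (of fun p q => u (f p) p * v (f p) q).det = 0 := by
    obtain ⟨p, p', hpp', hne⟩ := Function.not_injective_iff.mp hf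
    calc _ = (∏ p, u (f p) p) * (of fun p => v (f p)).det := det_mul_column _ _
      _ = 0 := by rw [det_zero_of_row_eq hne (congrArg v hpp'), mul_zero]
  rw [hrows, hexpand, ← Finset.sum_filter_of_ne fun f _ => not_imp_comm.mp (hvanish f),
    Finset.sum_subtype _ (p := Function.Injective) (by simp),
    ← (Equiv.subtypeInjectiveEquivEmbedding n ι).sum_comp]
  rfl

end Matrix

namespace ProbabilityTheory

theorem poissonPMF_toMeasure_eq_poissonMeasure (r : NNReal) :
    (poissonPMF r).toMeasure = poissonMeasure r :=
  Measure.ext_iff_singleton.mpr fun k => by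
    rw [PMF.toMeasure_apply_singleton _ _ (measurableSet_singleton k), poissonMeasure_singleton]
    rfl

theorem hasSum_poissonMeasure_real_mul_descFactorial (r : NNReal) (d : ℕ) :
    HasSum (fun k => (poissonMeasure r).real {k} * k.descFactorial d) ((r : ℝ) ^ d) := by
  simp_rw [poissonMeasure_real_singleton]
  have hshift (j : ℕ) : Real.exp (-r) * r ^ (j + d) / (j + d).factorial * (j + d).descFactorial d =
      (r : ℝ) ^ d * (Real.exp (-r) * r ^ j / j.factorial) := by
    have hfact : (j.factorial : ℝ) * (j + d).descFactorial d = (j + d).factorial := by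
      exact_mod_cast Nat.add_sub_cancel j d ▸ Nat.factorial_mul_descFactorial (Nat.le_add_left d j)
    rw [← hfact]
    field_simp
    ring
  have hlow : ∑ k ∈ Finset.range d,
      Real.exp (-r) * r ^ k / k.factorial * (k.descFactorial d : ℝ) = 0 :=
    Finset.sum_eq_zero fun k hk => by
      rw [Nat.descFactorial_of_lt (Finset.mem_range.mp hk), Nat.cast_zero, mul_zero]
  rw [← add_zero ((r : ℝ) ^ d), ← hlow, ← hasSum_nat_add_iff, funext hshift]
  simpa only [mul_one] using (hasSum_one_poissonMeasure r).mul_left ((r : ℝ) ^ d)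

variable {Ω : Type*} [MeasurableSpace Ω] {μ : Measure Ω}

theorem integral_comp_eq_tsum_of_indepFun {κ β E : Type*} [MeasurableSpace κ] [Countable κ]
    [MeasurableSingletonClass κ] [MeasurableSpace β] [NormedAddCommGroup E] [NormedSpace ℝ E]
    {K : Ω → κ} {Y : Ω → β} (hK : Measurable K) (hY : AEMeasurable Y μ) (hKY : IndepFun K Y μ)
    {G : κ → β → E} (hG : ∀ k, AEStronglyMeasurable (G k) (μ.map Y))
    (hint : Integrable (fun ω => G (K ω) (Y ω)) μ) :
    ∫ ω, G (K ω) (Y ω) ∂μ = ∑' k, μ.real (K ⁻¹' {k}) • ∫ ω, G k (Y ω) ∂μ := by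
  have hfiber (k : κ) : MeasurableSet (K ⁻¹' {k}) := hK (measurableSet_singleton k)
  have hcover : (⋃ k, K ⁻¹' {k}) = Set.univ := by
    ext ω
    simp
  rw [← setIntegral_univ, ← hcover,
    integral_iUnion hfiber (fun k k' hkk' => Set.disjoint_singleton.mpr hkk' |>.preimage K)
      (hcover ▸ hint.integrableOn)]
  refine tsum_congr fun k => ?_
  calc ∫ ω in K ⁻¹' {k}, G (K ω) (Y ω) ∂μ = ∫ ω in K ⁻¹' {k}, G k (Y ω) ∂μ :=
        setIntegral_congr_fun (hfiber k) fun ω hω => by rw [show K ω = k from hω]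
    _ = μ.real (K ⁻¹' {k}) • ∫ ω, G k (Y ω) ∂μ :=
        Indep.setIntegral_eq_smul hK.comap_le hKY hY ⟨{k}, measurableSet_singleton k, rfl⟩ (hG k)

variable {𝕜 : Type*} [RCLike 𝕜]

theorem iIndepFun.integrable_fun_prod {ι : Type*} [Fintype ι] {X : ι → Ω → 𝕜}
    (hX : iIndepFun X μ) (hint : ∀ i, Integrable (X i) μ) :
    Integrable (fun ω => ∏ i, X i ω) μ := by
  have := hX.isProbabilityMeasure
  have hmeas (i : ι) : AEMeasurable (X i) μ := (hint i).aemeasurable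
  have hpi : Integrable (fun x : ι → 𝕜 => ∏ i, x i) (μ.map fun ω i => X i ω) := by
    rw [hX.map_fun_eq_pi_map hmeas]
    exact Integrable.fintype_prod (f := fun _ => id) fun i =>
      (integrable_map_measure aestronglyMeasurable_id (hmeas i)).2 (hint i)
  exact hpi.comp_aemeasurable (aemeasurable_pi_lambda _ hmeas)

section Det

variable {n : Type*} [Fintype n] [DecidableEq n] {X : n → Ω → n → 𝕜}

omit [Fintype n] [DecidableEq n] in
theorem iIndepFun.comp_perm_entries (hX : iIndepFun X μ) (σ : Equiv.Perm n) :
    iIndepFun (fun p ω => X p ω (σ p)) μ :=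
  hX.comp (fun p x => x (σ p)) fun _ => measurable_pi_apply _

theorem iIndepFun.integrable_det (hX : iIndepFun X μ)
    (hint : ∀ p q, Integrable (fun ω => X p ω q) μ) :
    Integrable (fun ω => (of fun p => X p ω).det) μ := by
  simp_rw [det_of_eq_sum_sign_mul_prod]
  exact integrable_finsetSum _ fun σ _ =>
    ((hX.comp_perm_entries σ).integrable_fun_prod fun p => hint p (σ p)).const_mul _

theorem iIndepFun.integral_det (hX : iIndepFun X μ)
    (hint : ∀ p q, Integrable (fun ω => X p ω q) μ) :
    ∫ ω, (of fun p => X p ω).det ∂μ = (of fun p q => ∫ ω, X p ω q ∂μ).det := by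
  simp_rw [det_of_eq_sum_sign_mul_prod]
  rw [integral_finsetSum _ fun σ _ =>
    ((hX.comp_perm_entries σ).integrable_fun_prod fun p => hint p (σ p)).const_mul _]
  refine Finset.sum_congr rfl fun σ _ => ?_
  rw [integral_const_mul, (hX.comp_perm_entries σ).integral_fun_prod_eq_prod_integral
    fun p => (hint p (σ p)).aestronglyMeasurable]

theorem integral_det_sum_vecMulVec_of_iIndepFun {ι : Type*} {a b : ι → Ω → n → 𝕜} (i₀ : ι)
    (hindep : iIndepFun (fun i ω => (a i ω, b i ω)) μ)
    (hident : ∀ i, IdentDistrib (fun ω => (a i ω, b i ω)) (fun ω => (a i₀ ω, b i₀ ω)) μ μ)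
    (hint : ∀ p q, Integrable (fun ω => a i₀ ω p * b i₀ ω q) μ) (s : Finset ι) :
    ∫ ω, (∑ i ∈ s, vecMulVec (a i ω) (b i ω)).det ∂μ =
      (s.card.descFactorial (Fintype.card n) : 𝕜) *
        (of fun p q => ∫ ω, a i₀ ω p * b i₀ ω q ∂μ).det := by
  have hentry (i : ι) (p q : n) :
      IdentDistrib (fun ω => a i ω p * b i ω q) (fun ω => a i₀ ω p * b i₀ ω q) μ μ :=
    (hident i).comp (u := fun x : (n → 𝕜) × (n → 𝕜) => x.1 p * x.2 q) (by fun_prop)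
  have hrowsIndep (e : n ↪ s) : iIndepFun (fun p ω q => a (e p) ω p * b (e p) ω q) μ :=
    (hindep.precomp (Subtype.val_injective.comp e.injective)).comp
      (fun p x q => x.1 p * x.2 q) fun _ => by fun_prop
  have hrowsInt (e : n ↪ s) (p q : n) : Integrable (fun ω => a (e p) ω p * b (e p) ω q) μ :=
    (hentry _ p q).integrable_iff.mpr (hint p q)
  have hexpand (ω : Ω) : (∑ i ∈ s, vecMulVec (a i ω) (b i ω)).det =
      ∑ e : n ↪ s, (of fun p q => a (e p) ω p * b (e p) ω q).det := by
    rw [← Finset.sum_coe_sort s]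
    exact det_sum_vecMulVec (fun i : s => a i ω) (fun i : s => b i ω)
  calc _ = ∑ e : n ↪ s, ∫ ω, (of fun p q => a (e p) ω p * b (e p) ω q).det ∂μ := by
        simp_rw [hexpand]
        exact integral_finsetSum _ fun e _ => (hrowsIndep e).integrable_det (hrowsInt e)
    _ = ∑ _e : n ↪ s, (of fun p q => ∫ ω, a i₀ ω p * b i₀ ω q ∂μ).det :=
        Finset.sum_congr rfl fun e _ => by
          rw [(hrowsIndep e).integral_det (hrowsInt e)]
          congr 1
          ext p q
          exact (hentry _ p q).integral_eq
    _ = _ := by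
        rw [Finset.sum_const, Finset.card_univ, Fintype.card_embedding_eq, Fintype.card_coe,
          nsmul_eq_mul]

end Det

end ProbabilityTheory

theorem expected_det_poisson_sum_rank_one_general {Ω : Type*} [MeasurableSpace Ω]
    (μ : Measure Ω) [IsProbabilityMeasure μ] {d : ℕ} (γ : NNReal)
    (K : Ω → ℕ) (hK : Measurable K)
    (hKpoisson : Measure.map K μ = (poissonPMF γ).toMeasure)
    (a b : ℕ → Ω → (Fin d → ℝ))
    (hIndep : iIndepFun (fun i ω => (a i ω, b i ω)) μ)
    (hIdent : ∀ i, IdentDistrib (fun ω => (a i ω, b i ω)) (fun ω => (a 0 ω, b 0 ω)) μ μ)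
    (hKindep : IndepFun K (fun ω => fun i : ℕ => (a i ω, b i ω)) μ)
    (hIntDet : Integrable
      (fun ω => (∑ i ∈ Finset.range (K ω), Matrix.vecMulVec (a i ω) (b i ω)).det) μ)
    (hIntEntry : ∀ p q, Integrable (fun ω => a 0 ω p * b 0 ω q) μ) :
    (∫ ω, (∑ i ∈ Finset.range (K ω), Matrix.vecMulVec (a i ω) (b i ω)).det ∂μ) =
      (Matrix.of fun p q => (γ : ℝ) * ∫ ω, a 0 ω p * b 0 ω q ∂μ).det := by
  set M := Matrix.of fun p q => ∫ ω, a 0 ω p * b 0 ω q ∂μ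
  have hKlaw (k : ℕ) : μ.real (K ⁻¹' {k}) = (poissonMeasure γ).real {k} := by
    rw [← map_measureReal_apply hK (measurableSet_singleton k), hKpoisson,
      poissonPMF_toMeasure_eq_poissonMeasure]
  calc _ = ∑' k, μ.real (K ⁻¹' {k}) •
        ∫ ω, (∑ i ∈ Finset.range k, vecMulVec (a i ω) (b i ω)).det ∂μ :=
        integral_comp_eq_tsum_of_indepFun hK
          (aemeasurable_pi_lambda _ fun i => (hIdent i).aemeasurable_fst) hKindep
          (G := fun k y => (∑ i ∈ Finset.range k, vecMulVec (y i).1 (y i).2).det)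
          (fun k => (Continuous.measurable (by fun_prop)).aestronglyMeasurable) hIntDet
    _ = ∑' k, (poissonMeasure γ).real {k} * k.descFactorial d * M.det := by
        congr with k
        rw [hKlaw, integral_det_sum_vecMulVec_of_iIndepFun 0 hIndep hIdent hIntEntry,
          Finset.card_range, Fintype.card_fin, smul_eq_mul, mul_assoc]
    _ = (γ : ℝ) ^ d * M.det :=
        ((hasSum_poissonMeasure_real_mul_descFactorial γ d).mul_right _).tsum_eq
    _ = ((γ : ℝ) • M).det := by rw [det_smul, Fintype.card_fin]

/-- Let `K` be Poisson with mean `γ` and, independently of `K`, let `(a_i, b_i)` be an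
i.i.d. sequence of pairs of random vectors in `ℝ^d`. With `AᵀB = ∑_{i < K} a_i b_iᵀ`
(the matrix built from the first `K` rows), we have `E[det(AᵀB)] = det(E[AᵀB])`, where
`E[AᵀB] = γ · E[a bᵀ]` for a single row pair. -/
theorem expected_det_poisson_sum_rank_one {Ω : Type*} [MeasurableSpace Ω]
    (μ : Measure Ω) [IsProbabilityMeasure μ] {d : ℕ} (γ : NNReal) (hγ : 0 < γ)
    (K : Ω → ℕ) (hK : Measurable K)
    (hKpoisson : Measure.map K μ = (poissonPMF γ).toMeasure)
    (a b : ℕ → Ω → (Fin d → ℝ))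
    (hMeas : ∀ i, Measurable (fun ω => (a i ω, b i ω)))
    (hIndep : iIndepFun (fun i ω => (a i ω, b i ω)) μ)
    (hIdent : ∀ i, IdentDistrib (fun ω => (a i ω, b i ω)) (fun ω => (a 0 ω, b 0 ω)) μ μ)
    (hKindep : IndepFun K (fun ω => fun i : ℕ => (a i ω, b i ω)) μ)
    (hIntDet : Integrable
      (fun ω => (∑ i ∈ Finset.range (K ω), Matrix.vecMulVec (a i ω) (b i ω)).det) μ)
    (hIntEntry : ∀ p q, Integrable (fun ω => a 0 ω p * b 0 ω q) μ) :
    (∫ ω, (∑ i ∈ Finset.range (K ω), Matrix.vecMulVec (a i ω) (b i ω)).det ∂μ) =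
      (Matrix.of fun p q => (γ : ℝ) * ∫ ω, a 0 ω p * b 0 ω q ∂μ).det :=
  expected_det_poisson_sum_rank_one_general μ γ K hK hKpoisson a b hIndep hIdent hKindep hIntDet
    hIntEntry
end

section
/- Let X be an n×d real matrix with n ≤ d such that X has rank n (so XXᵀ is invertible). Then det(XXᵀ)·tr((XᵀX)⁺) = Σ_{i=1}^n det(X_{−i} X_{−i}ᵀ), where X_{−i} is X with row i removed and (XᵀX)⁺ denotes the Moore–Penrose pseudoinverse. -/
/-!
With `G = XXᵀ` invertible, the pseudoinverse of `XᵀX` is `Xᵀ G⁻² X`, whose trace is `tr G⁻¹`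
by cyclicity. Then `det G · tr G⁻¹ = tr (adj G)`, the diagonal of the adjugate consists of the
principal `(n-1)`-minors of `G`, and deleting row and column `i` from `XXᵀ` gives
`X_{−i} X_{−i}ᵀ`.
-/

open Matrix

/-- `P` is the Moore–Penrose pseudoinverse of `A` (the four Penrose conditions;
the pseudoinverse is the unique such matrix). -/
def IsMoorePenrose {m n : ℕ} (A : Matrix (Fin m) (Fin n) ℝ)
    (P : Matrix (Fin n) (Fin m) ℝ) : Prop :=
  A * P * A = A ∧ P * A * P = P ∧ (A * P)ᵀ = A * P ∧ (P * A)ᵀ = P * A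

theorem IsMoorePenrose.unique {m n : ℕ} {A : Matrix (Fin m) (Fin n) ℝ}
    {P Q : Matrix (Fin n) (Fin m) ℝ}
    (hP : IsMoorePenrose A P) (hQ : IsMoorePenrose A Q) : P = Q := by
  obtain ⟨hP₁, hP₂, hP₃, hP₄⟩ := hP
  obtain ⟨hQ₁, hQ₂, hQ₃, hQ₄⟩ := hQ
  have hAP : A * P = A * Q :=
    calc A * P = (A * P)ᵀ := hP₃.symm
    _ = Pᵀ * (A * Q * A)ᵀ := by rw [transpose_mul, hQ₁]
    _ = (A * P)ᵀ * (A * Q)ᵀ := by simp only [transpose_mul, Matrix.mul_assoc]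
    _ = A * P * A * Q := by rw [hP₃, hQ₃]; simp only [Matrix.mul_assoc]
    _ = A * Q := by rw [hP₁]
  have hPA : P * A = Q * A :=
    calc P * A = (P * A)ᵀ := hP₄.symm
    _ = (A * Q * A)ᵀ * Pᵀ := by rw [transpose_mul, hQ₁]
    _ = (Q * A)ᵀ * (P * A)ᵀ := by simp only [transpose_mul, Matrix.mul_assoc]
    _ = Q * (A * P * A) := by rw [hP₄, hQ₄]; simp only [Matrix.mul_assoc]
    _ = Q * A := by rw [hP₁]
  calc P = P * A * P := hP₂.symm
  _ = P * (A * Q) := by rw [Matrix.mul_assoc, hAP]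
  _ = Q * A * Q := by rw [← Matrix.mul_assoc, hPA]
  _ = Q := hQ₂

theorem isMoorePenrose_transpose_mul_self {n d : ℕ} (X : Matrix (Fin n) (Fin d) ℝ)
    (hX : IsUnit (X * Xᵀ).det) :
    IsMoorePenrose (Xᵀ * X) (Xᵀ * (X * Xᵀ)⁻¹ * (X * Xᵀ)⁻¹ * X) := by
  set G := X * Xᵀ with hG
  have hGt : Gᵀ = G := by rw [hG, transpose_mul, transpose_transpose]
  have hXXt {k : Type} (B : Matrix (Fin n) k ℝ) : X * (Xᵀ * B) = G * B :=
    (Matrix.mul_assoc _ _ _).symm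
  have hGGinv {k : Type} (B : Matrix (Fin n) k ℝ) : G * (G⁻¹ * B) = B :=
    mul_nonsing_inv_cancel_left _ _ hX
  have hGinvG {k : Type} (B : Matrix (Fin n) k ℝ) : G⁻¹ * (G * B) = B :=
    nonsing_inv_mul_cancel_left _ _ hX
  -- in right-associated form every occurrence of `X Xᵀ` next to `G⁻¹` cancels
  refine ⟨?_, ?_, ?_, ?_⟩ <;>
    simp only [Matrix.mul_assoc, transpose_mul, transpose_transpose, transpose_nonsing_inv, hGt,
      hXXt, hGGinv, hGinvG]

section CommRing

variable {m n R : Type*} [Fintype m] [Fintype n] [DecidableEq m] [CommRing R]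

theorem trace_transpose_mul_inv_mul_inv_mul (X : Matrix m n R) (hX : IsUnit (X * Xᵀ).det) :
    (Xᵀ * (X * Xᵀ)⁻¹ * (X * Xᵀ)⁻¹ * X).trace = ((X * Xᵀ)⁻¹).trace := by
  rw [trace_mul_comm, ← Matrix.mul_assoc, ← Matrix.mul_assoc, mul_nonsing_inv _ hX,
    Matrix.one_mul]

theorem det_mul_trace_inv (A : Matrix m m R) (hA : IsUnit A.det) :
    A.det * (A⁻¹).trace = (adjugate A).trace := by
  rw [inv_def, trace_smul, smul_eq_mul, ← mul_assoc, Ring.mul_inverse_cancel _ hA, one_mul]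

theorem adjugate_apply_self (A : Matrix m m R) (i : m) :
    adjugate A i i = (A.submatrix ((↑) : {j // j ≠ i} → m) (↑)).det := by
  rw [adjugate_apply, ← det_submatrix_equiv_self (Equiv.sumCompl (· = i))]
  have hblock : (A.updateRow i (Pi.single i 1)).submatrix (Equiv.sumCompl (· = i))
      (Equiv.sumCompl (· = i)) =
      fromBlocks 1 0 (of fun (j : {j // j ≠ i}) (_ : {j // j = i}) => A j i)
        (A.submatrix ((↑) : {j // j ≠ i} → m) (↑)) := by
    ext (⟨j, rfl⟩ | ⟨j, hj⟩) (⟨k, rfl⟩ | ⟨k, hk⟩) <;>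
      simp [updateRow_apply, Ne.symm, *]
  rw [hblock, det_fromBlocks_zero₁₂, det_one, one_mul]

theorem trace_adjugate (A : Matrix m m R) :
    (adjugate A).trace = ∑ i : m, (A.submatrix ((↑) : {j // j ≠ i} → m) (↑)).det :=
  Finset.sum_congr rfl fun i _ => adjugate_apply_self A i

end CommRing

theorem submatrix_mul_transpose_self {l m n R : Type*} [Fintype n] [CommRing R]
    (X : Matrix m n R) (e : l → m) :
    (X * Xᵀ).submatrix e e = X.submatrix e id * (X.submatrix e id)ᵀ := by
  rw [submatrix_mul _ _ e id e Function.bijective_id, transpose_submatrix]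

theorem isUnit_of_rank_eq_card {ι K : Type*} [Fintype ι] [DecidableEq ι] [Field K]
    {A : Matrix ι ι K} (h : A.rank = Fintype.card ι) : IsUnit A := by
  rw [← mulVec_surjective_iff_isUnit, ← coe_mulVecLin, ← LinearMap.range_eq_top]
  apply Submodule.eq_top_of_finrank_eq
  rw [← Matrix.rank, h, Module.finrank_fintype_fun_eq_card]

theorem det_mul_trace_pinv_eq_sum_minors_general {n d : ℕ}
    (X : Matrix (Fin n) (Fin d) ℝ) (hrank : X.rank = n)
    (P : Matrix (Fin d) (Fin d) ℝ) (hP : IsMoorePenrose (Xᵀ * X) P) :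
    (X * Xᵀ).det * P.trace =
      ∑ i : Fin n,
        ((X.submatrix (fun j : {j : Fin n // j ≠ i} => (j : Fin n)) id) *
          (X.submatrix (fun j : {j : Fin n // j ≠ i} => (j : Fin n)) id)ᵀ).det := by
  have hG : IsUnit (X * Xᵀ).det := (isUnit_iff_isUnit_det _).mp <|
    isUnit_of_rank_eq_card (by rw [rank_self_mul_transpose, hrank, Fintype.card_fin])
  rw [hP.unique (isMoorePenrose_transpose_mul_self X hG),
    trace_transpose_mul_inv_mul_inv_mul X hG, det_mul_trace_inv _ hG, trace_adjugate]
  simp only [submatrix_mul_transpose_self]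

/-- For an `n × d` matrix `X` of full row rank `n ≤ d`,
`det(XXᵀ) · tr((XᵀX)⁺) = ∑ i, det(X_{−i} X_{−i}ᵀ)`, where `X_{−i}` is `X` with row `i`
removed. -/
theorem det_mul_trace_pinv_eq_sum_minors {n d : ℕ} (hnd : n ≤ d)
    (X : Matrix (Fin n) (Fin d) ℝ) (hrank : X.rank = n)
    (P : Matrix (Fin d) (Fin d) ℝ) (hP : IsMoorePenrose (Xᵀ * X) P) :
    (X * Xᵀ).det * P.trace =
      ∑ i : Fin n,
        ((X.submatrix (fun j : {j : Fin n // j ≠ i} => (j : Fin n)) id) *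
          (X.submatrix (fun j : {j : Fin n // j ≠ i} => (j : Fin n)) id)ᵀ).det :=
  det_mul_trace_pinv_eq_sum_minors_general X hrank P hP
end
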